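/- arXiv:1903.05040 — 2 statements merged into one kernel-verified Lean document; each statement's English description precedes it below -/
import Mathlib

section
/- Let $w \in C^2((0,\infty);\mathbb{R})$ satisfy $w(r) \geq 0$, $w'(r) \leq 0$, and $r(w'(r)^2 + 2w(r)w''(r)) \geq 2w(r)w'(r)$ for all $r > 0$. Let $g : (0,\infty) \to \mathbb{C}$ be a $C^1$ function such that $\int_0^\infty (w^2 |g'|^2 + (w')^2 |g|^2)\,dr < \infty$ and $\liminf_{r \to 0} w(r)w'(r)|g(r)|^2 = 0$. Then $\int_0^\infty w(r)^2 \frac{|g(r)|^2}{r^2}\,dr \leq 4 \int_0^\infty w(r)^2 |g'(r)|^2\,dr$. -/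
/-!
Put `B r = 2 w (w' - w / r) ‖g‖²`. Expanding `‖2 r w g' + (r w' - w) g‖² ≥ 0` and using the
hypothesis on `w` gives, pointwise, `w² ‖g‖² / r² ≤ 4 w² ‖g'‖² + B'`. Integrating over `[a, b]`,
the term `B b` is nonpositive since `w ≥ 0 ≥ w'`, while `-B a ≤ 3 a (w'² ‖g‖² + w² ‖g‖² / a²)`
can be made arbitrarily small for suitable `a → 0` because the bracket is integrable near `0`.
If the left-hand side is not integrable, its integral is `0` by convention.
-/

open MeasureTheory Set Filter Real

theorem exists_mul_le_of_integrableOn_Ioo {H : ℝ → ℝ} {δ : ℝ} (hH : IntegrableOn H (Ioo 0 δ))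
    (hδ : 0 < δ) {ε : ℝ} (hε : 0 < ε) : ∃ a ∈ Ioo 0 δ, a * H a ≤ ε := by
  -- otherwise `ε / a < H a` on `(0, δ)`, but `1 / a` is not integrable at `0`
  by_contra! hlarge
  have hinv : IntegrableOn (fun x : ℝ => x ^ (-1 : ℝ)) (Ioo 0 δ) := by
    refine (hH.const_mul ε⁻¹).mono' (by fun_prop) ?_
    filter_upwards [ae_restrict_mem measurableSet_Ioo] with x hx
    rw [Real.rpow_neg_one, Real.norm_of_nonneg (inv_nonneg.2 hx.1.le), ← div_eq_inv_mul,
      le_div_iff₀ hε, inv_mul_le_iff₀ hx.1]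
    exact (hlarge x hx).le
  have := (intervalIntegral.integrableOn_Ioo_rpow_iff hδ).1 hinv
  norm_num at this

theorem setIntegral_Ioi_zero_le_of_forall_Ioc {f : ℝ → ℝ} {C : ℝ} (hf : IntegrableOn f (Ioi 0))
    (h : ∀ c d : ℝ, 0 < c → c ≤ d → ∫ x in Ioc c d, f x ≤ C) : ∫ x in Ioi 0, f x ≤ C := by
  set s : ℕ → Set ℝ := fun n => Ioc (n + 1 : ℝ)⁻¹ (n + 1)
  have hmono : Monotone s := fun m n hmn => by
    have : (m + 1 : ℝ) ≤ n + 1 := by gcongr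
    exact Ioc_subset_Ioc (inv_anti₀ (by positivity) this) this
  have hunion : ⋃ n, s n = Ioi 0 := by
    refine Subset.antisymm (iUnion_subset fun n x hx => (inv_pos.2 (by positivity)).trans hx.1)
      fun x hx => ?_
    obtain ⟨n, hn⟩ := exists_nat_gt (max x x⁻¹)
    refine mem_iUnion.2 ⟨n, ?_, by linarith [le_max_left x x⁻¹]⟩
    rw [inv_lt_comm₀ (by positivity) hx]
    linarith [le_max_right x x⁻¹]
  have hlim := tendsto_setIntegral_of_monotone (fun n => measurableSet_Ioc) hmono
    (hunion ▸ hf)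
  rw [hunion] at hlim
  refine le_of_tendsto' hlim fun n => h _ _ (by positivity) ?_
  calc (n + 1 : ℝ)⁻¹ ≤ 1 := inv_le_one_of_one_le₀ (by linarith [n.cast_nonneg (α := ℝ)])
    _ ≤ n + 1 := by linarith [n.cast_nonneg (α := ℝ)]

section Hardy

variable {E : Type*} [NormedAddCommGroup E]

noncomputable def hardyBoundary (w : ℝ → ℝ) (g : ℝ → E) (r : ℝ) : ℝ :=
  2 * w r * (deriv w r - w r / r) * ‖g r‖ ^ 2

theorem neg_hardyBoundary_le (w : ℝ → ℝ) (g : ℝ → E) {a : ℝ} (ha : 0 < a) :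
    -hardyBoundary w g a ≤ 3 * a * (deriv w a ^ 2 * ‖g a‖ ^ 2 + w a ^ 2 * ‖g a‖ ^ 2 / a ^ 2) := by
  have hsq : 0 ≤ (a * deriv w a + w a) ^ 2 + 2 * (a * deriv w a) ^ 2 := by positivity
  have e : 3 * a * (deriv w a ^ 2 * ‖g a‖ ^ 2 + w a ^ 2 * ‖g a‖ ^ 2 / a ^ 2) + hardyBoundary w g a
      = ((a * deriv w a + w a) ^ 2 + 2 * (a * deriv w a) ^ 2) * ‖g a‖ ^ 2 / a := by
    unfold hardyBoundary
    field_simp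
    ring
  have := div_nonneg (mul_nonneg hsq (sq_nonneg ‖g a‖)) ha.le
  linarith

theorem hardyBoundary_nonpos {w : ℝ → ℝ} (g : ℝ → E) {r : ℝ} (hr : 0 < r) (hw : 0 ≤ w r)
    (hw' : deriv w r ≤ 0) : hardyBoundary w g r ≤ 0 := by
  have : deriv w r - w r / r ≤ 0 := by
    have := div_nonneg hw hr.le
    linarith
  unfold hardyBoundary
  exact mul_nonpos_of_nonpos_of_nonneg (mul_nonpos_of_nonneg_of_nonpos (by positivity) this)
    (by positivity)

variable {w : ℝ → ℝ} {g : ℝ → E}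

theorem continuousOn_sq_mul_norm_sq_div_sq (hw : ContinuousOn w (Ioi 0))
    (hg : ContinuousOn g (Ioi 0)) :
    ContinuousOn (fun r => w r ^ 2 * ‖g r‖ ^ 2 / r ^ 2) (Ioi 0) :=
  ((hw.pow 2).mul (hg.norm.pow 2)).div (continuousOn_id.pow 2) fun _ hr =>
    pow_ne_zero 2 (ne_of_gt hr)

variable [InnerProductSpace ℝ E]

theorem weighted_hardy_pointwise (x y : E) {r W W₁ W₂ : ℝ} (hr : 0 < r)
    (h : 2 * W * W₁ ≤ r * (W₁ ^ 2 + 2 * W * W₂)) :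
    W ^ 2 * ‖x‖ ^ 2 / r ^ 2 ≤ 4 * (W ^ 2 * ‖y‖ ^ 2)
      + 2 * ((W₁ * (W₁ - W / r) + W * (W₂ - W₁ / r + W / r ^ 2)) * ‖x‖ ^ 2
        + W * (W₁ - W / r) * (2 * inner ℝ x y)) := by
  set a := 2 * r * W
  set b := r * W₁ - W
  have hexpand :
      ‖a • y + b • x‖ ^ 2 = a ^ 2 * ‖y‖ ^ 2 + 2 * a * b * inner ℝ x y + b ^ 2 * ‖x‖ ^ 2 := by
    rw [norm_add_sq_real, norm_smul, norm_smul, inner_smul_left, inner_smul_right,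
      real_inner_comm, conj_trivial, mul_pow, mul_pow, Real.norm_eq_abs, Real.norm_eq_abs, sq_abs,
      sq_abs]
    ring
  have hgap : 0 ≤ (r * (W₁ ^ 2 + 2 * W * W₂) - 2 * W * W₁) * r * ‖x‖ ^ 2 := by
    have := sub_nonneg.2 h
    positivity
  have e : (4 * (W ^ 2 * ‖y‖ ^ 2)
      + 2 * ((W₁ * (W₁ - W / r) + W * (W₂ - W₁ / r + W / r ^ 2)) * ‖x‖ ^ 2
        + W * (W₁ - W / r) * (2 * inner ℝ x y))) * r ^ 2 =
      a ^ 2 * ‖y‖ ^ 2 + 2 * a * b * inner ℝ x y + b ^ 2 * ‖x‖ ^ 2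
        + (r * (W₁ ^ 2 + 2 * W * W₂) - 2 * W * W₁) * r * ‖x‖ ^ 2 + W ^ 2 * ‖x‖ ^ 2 := by
    field_simp
    ring
  rw [div_le_iff₀ (by positivity), e, ← hexpand]
  linarith [sq_nonneg ‖a • y + b • x‖]

theorem hasDerivAt_hardyBoundary {r w₂ : ℝ} {g' : E} (hr : r ≠ 0)
    (hw : HasDerivAt w (deriv w r) r) (hw' : HasDerivAt (deriv w) w₂ r)
    (hg : HasDerivAt g g' r) :
    HasDerivAt (hardyBoundary w g) (2 * ((deriv w r * (deriv w r - w r / r)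
      + w r * (w₂ - deriv w r / r + w r / r ^ 2)) * ‖g r‖ ^ 2
        + w r * (deriv w r - w r / r) * (2 * inner ℝ (g r) g'))) r := by
  refine (((hw.const_mul 2).fun_mul (hw'.fun_sub (hw.fun_div (hasDerivAt_id' r) hr))).fun_mul
    hg.norm_sq).congr_deriv ?_
  field_simp
  ring

theorem integral_Ioc_le_add_hardyBoundary (hw : ContDiffOn ℝ 2 w (Ioi 0))
    (hg : ContDiffOn ℝ 1 g (Ioi 0))
    (hw_ineq : ∀ r ∈ Ioi (0 : ℝ),
      2 * w r * deriv w r ≤ r * (deriv w r ^ 2 + 2 * w r * deriv (deriv w) r))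
    {a b : ℝ} (ha : 0 < a) (hab : a ≤ b) :
    ∫ r in Ioc a b, w r ^ 2 * ‖g r‖ ^ 2 / r ^ 2
      ≤ 4 * (∫ r in Ioc a b, w r ^ 2 * ‖deriv g r‖ ^ 2)
        + (hardyBoundary w g b - hardyBoundary w g a) := by
  have hsub : Icc a b ⊆ Ioi 0 := fun x hx => ha.trans_le hx.1
  have hw' : ContDiffOn ℝ 1 (deriv w) (Ioi 0) := hw.deriv_of_isOpen isOpen_Ioi (by norm_num)
  have hB : ∀ r ∈ Ioi (0 : ℝ), HasDerivAt (hardyBoundary w g) _ r := fun r hr =>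
    hasDerivAt_hardyBoundary (ne_of_gt hr)
      ((hw.differentiableOn (by norm_num)).hasDerivAt (Ioi_mem_nhds hr))
      ((hw'.differentiableOn one_ne_zero).hasDerivAt (Ioi_mem_nhds hr))
      ((hg.differentiableOn one_ne_zero).hasDerivAt (Ioi_mem_nhds hr))
  have hlhs : IntegrableOn (fun r => w r ^ 2 * ‖g r‖ ^ 2 / r ^ 2) (Icc a b) :=
    ((continuousOn_sq_mul_norm_sq_div_sq hw.continuousOn hg.continuousOn).mono
      hsub).integrableOn_Icc
  have hrhs : IntegrableOn (fun r => w r ^ 2 * ‖deriv g r‖ ^ 2) (Icc a b) :=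
    (((hw.continuousOn.pow 2).mul
      ((hg.continuousOn_deriv_of_isOpen isOpen_Ioi le_rfl).norm.pow 2)).mono hsub).integrableOn_Icc
  have hftc := intervalIntegral.integral_le_sub_of_hasDeriv_right_of_le
    (φ := fun r => w r ^ 2 * ‖g r‖ ^ 2 / r ^ 2 - 4 * (w r ^ 2 * ‖deriv g r‖ ^ 2)) hab
    (fun x hx => (hB x (hsub hx)).continuousAt.continuousWithinAt)
    (fun x hx => (hB x (hsub (Ioo_subset_Icc_self hx))).hasDerivWithinAt)
    (hlhs.sub (hrhs.const_mul 4)) fun x hx => by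
      linarith [weighted_hardy_pointwise (g x) (deriv g x) (hsub (Ioo_subset_Icc_self hx)).out
        (hw_ineq x (hsub (Ioo_subset_Icc_self hx)))]
  rw [intervalIntegral.integral_of_le hab, integral_sub (hlhs.mono_set Ioc_subset_Icc_self)
    ((hrhs.mono_set Ioc_subset_Icc_self).const_mul 4), integral_const_mul,
    sub_le_iff_le_add'] at hftc
  exact hftc

theorem integral_Ioc_le_four_mul_integral_Ioi (hw : ContDiffOn ℝ 2 w (Ioi 0))
    (hw_nonneg : ∀ r ∈ Ioi (0 : ℝ), 0 ≤ w r) (hw_mono : ∀ r ∈ Ioi (0 : ℝ), deriv w r ≤ 0)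
    (hw_ineq : ∀ r ∈ Ioi (0 : ℝ),
      2 * w r * deriv w r ≤ r * (deriv w r ^ 2 + 2 * w r * deriv (deriv w) r))
    (hg : ContDiffOn ℝ 1 g (Ioi 0))
    (hrhs : IntegrableOn (fun r => w r ^ 2 * ‖deriv g r‖ ^ 2) (Ioi 0))
    {c d : ℝ} (hc : 0 < c) (hcd : c ≤ d)
    (hH : IntegrableOn (fun r => deriv w r ^ 2 * ‖g r‖ ^ 2 + w r ^ 2 * ‖g r‖ ^ 2 / r ^ 2)
      (Ioo 0 c)) :
    ∫ r in Ioc c d, w r ^ 2 * ‖g r‖ ^ 2 / r ^ 2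
      ≤ 4 * ∫ r in Ioi 0, w r ^ 2 * ‖deriv g r‖ ^ 2 := by
  refine le_of_forall_pos_le_add fun ε hε => ?_
  obtain ⟨a, ⟨ha, hac⟩, haH⟩ := exists_mul_le_of_integrableOn_Ioo hH hc (div_pos hε three_pos)
  have hsub : Ioc a d ⊆ Ioi 0 := fun x hx => ha.trans hx.1
  calc ∫ r in Ioc c d, w r ^ 2 * ‖g r‖ ^ 2 / r ^ 2
      ≤ ∫ r in Ioc a d, w r ^ 2 * ‖g r‖ ^ 2 / r ^ 2 :=
        setIntegral_mono_set ((((continuousOn_sq_mul_norm_sq_div_sq hw.continuousOn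
            hg.continuousOn).mono fun x hx => ha.trans_le hx.1).integrableOn_Icc).mono_set
            Ioc_subset_Icc_self)
          (ae_of_all _ fun r => by positivity) (Ioc_subset_Ioc_left hac.le).eventuallyLE
    _ ≤ 4 * (∫ r in Ioc a d, w r ^ 2 * ‖deriv g r‖ ^ 2)
        + (hardyBoundary w g d - hardyBoundary w g a) :=
      integral_Ioc_le_add_hardyBoundary hw hg hw_ineq ha (hac.le.trans hcd)
    _ ≤ 4 * (∫ r in Ioi 0, w r ^ 2 * ‖deriv g r‖ ^ 2) + ε := by
      have hd : 0 < d := hc.trans_le hcd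
      have := hardyBoundary_nonpos g hd (hw_nonneg d hd) (hw_mono d hd)
      have := neg_hardyBoundary_le w g ha
      have : ∫ r in Ioc a d, w r ^ 2 * ‖deriv g r‖ ^ 2 ≤ ∫ r in Ioi 0, w r ^ 2 * ‖deriv g r‖ ^ 2 :=
        setIntegral_mono_set hrhs (ae_of_all _ fun r => by positivity) hsub.eventuallyLE
      linarith

end Hardy

theorem stmt_1_general (w : ℝ → ℝ) (hw : ContDiffOn ℝ 2 w (Ioi (0:ℝ)))
    (hw_nonneg : ∀ r ∈ Ioi (0:ℝ), 0 ≤ w r)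
    (hw_mono : ∀ r ∈ Ioi (0:ℝ), deriv w r ≤ 0)
    (hw_ineq : ∀ r ∈ Ioi (0:ℝ),
      r * ((deriv w r) ^ 2 + 2 * w r * deriv (deriv w) r) ≥ 2 * w r * deriv w r)
    (g : ℝ → ℂ) (hg : ContDiffOn ℝ 1 g (Ioi (0:ℝ)))
    (hint : IntegrableOn
      (fun r => (w r) ^ 2 * ‖deriv g r‖ ^ 2 + (deriv w r) ^ 2 * ‖g r‖ ^ 2) (Ioi (0:ℝ))) :
    ∫ r in Ioi (0:ℝ), (w r) ^ 2 * ‖g r‖ ^ 2 / r ^ 2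
      ≤ 4 * ∫ r in Ioi (0:ℝ), (w r) ^ 2 * ‖deriv g r‖ ^ 2 := by
  by_cases hlhs : IntegrableOn (fun r => (w r) ^ 2 * ‖g r‖ ^ 2 / r ^ 2) (Ioi (0:ℝ))
  · obtain ⟨hrhs, hw'g⟩ := (integrable_add_iff_of_nonneg
      (f := fun r => w r ^ 2 * ‖deriv g r‖ ^ 2) (g := fun r => deriv w r ^ 2 * ‖g r‖ ^ 2)
      (((hw.continuousOn.pow 2).mul ((hg.continuousOn_deriv_of_isOpen isOpen_Ioi le_rfl).norm.pow
        2)).aestronglyMeasurable measurableSet_Ioi)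
      (ae_of_all _ fun r => by positivity)
      (ae_of_all _ fun r => by positivity)).1 hint
    exact setIntegral_Ioi_zero_le_of_forall_Ioc hlhs fun c d hc hcd =>
      integral_Ioc_le_four_mul_integral_Ioi hw hw_nonneg hw_mono hw_ineq hg hrhs hc hcd
        ((IntegrableOn.mono_set hw'g Ioo_subset_Ioi_self).add (hlhs.mono_set Ioo_subset_Ioi_self))
  · rw [integral_undef hlhs]
    exact mul_nonneg four_pos.le (setIntegral_nonneg measurableSet_Ioi fun r _ => by positivity)

/-- Weighted Hardy inequality on the half-line. -/
theorem stmt_1 (w : ℝ → ℝ) (hw : ContDiffOn ℝ 2 w (Ioi (0:ℝ)))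
    (hw_nonneg : ∀ r ∈ Ioi (0:ℝ), 0 ≤ w r)
    (hw_mono : ∀ r ∈ Ioi (0:ℝ), deriv w r ≤ 0)
    (hw_ineq : ∀ r ∈ Ioi (0:ℝ),
      r * ((deriv w r) ^ 2 + 2 * w r * deriv (deriv w) r) ≥ 2 * w r * deriv w r)
    (g : ℝ → ℂ) (hg : ContDiffOn ℝ 1 g (Ioi (0:ℝ)))
    (hint : IntegrableOn
      (fun r => (w r) ^ 2 * ‖deriv g r‖ ^ 2 + (deriv w r) ^ 2 * ‖g r‖ ^ 2) (Ioi (0:ℝ)))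
    (hliminf : liminf (fun r => w r * deriv w r * ‖g r‖ ^ 2) (nhdsWithin 0 (Ioi (0:ℝ))) = 0) :
    ∫ r in Ioi (0:ℝ), (w r) ^ 2 * ‖g r‖ ^ 2 / r ^ 2
      ≤ 4 * ∫ r in Ioi (0:ℝ), (w r) ^ 2 * ‖deriv g r‖ ^ 2 :=
  stmt_1_general w hw hw_nonneg hw_mono hw_ineq g hg hint
end

section
/- Let $H$ be a Hilbert space and let $G$, $m$ be linear operators on (a dense domain of) $H$ with $m$ symmetric and bounded. Suppose $g \in H$ satisfies $\|(G - im)g\|^2 \geq 0$ and $\langle (G - im)g, (G-im)g \rangle = \|Gg\|^2 - \langle (wm' - m^2) g, g\rangle$ in the concrete setting $H = L^2((0,\infty))$, $G = \frac{1}{i}(w\partial_r + \frac{1}{2}w')$, $m(r) = -\frac{w(r)}{2r}$ with $w$ as in the weighted Hardy lemma. Then $\int_0^\infty \big(\tfrac{1}{4}(w')^2 + \tfrac{1}{2}ww'' + wm' - m^2\big)|g|^2\,dr \leq \int_0^\infty w^2 |g'|^2\,dr$, and since $\tfrac{1}{4}(w')^2 + \tfrac{1}{2}ww'' - \tfrac{ww'}{2r}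 + \tfrac{w^2}{4r^2} \geq \tfrac{w^2}{4r^2}$ under the condition $r(w'^2 + 2ww'') \geq 2ww'$, one concludes $\int_0^\infty \frac{w^2 |g|^2}{4r^2}\,dr \leq \int_0^\infty w^2 |g'|^2\,dr$. -/
/-!
Put `a = w'/2 + m`. Expanding `‖w g' + a g‖² ≥ 0` (this is `‖(G - i m) g‖²`) gives
`V ‖g‖² ≤ w² ‖g'‖² + (w a ‖g‖²)'` with `V = potential w m = w'²/4 + w w''/2 + w m' - m²`, so on
`[ε, R]` the integral of `V ‖g‖²` is bounded by that of `w² ‖g'‖²` plus boundary terms. For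
`m = -w/(2r)` the term at `R` is `≤ 0` because `w ≥ 0 ≥ w'`, and `V ≥ w²/(4r²)` is the hypothesis
`r (w'² + 2 w w'') ≥ 2 w w'`. The term at `ε` is at most `ε h(ε)` with `h` integrable as soon as
`w² ‖g‖²/r²` is, and then it is small for arbitrarily small `ε` because `1/ε` is not integrable
at `0`. If `w² ‖g‖²/r²` is not integrable, neither is `V ‖g‖² ≥ w² ‖g‖²/(4r²)`, and both
integrals are Lean's junk value `0`.
-/

open MeasureTheory Set Filter Topology

theorem setIntegral_Ioi_le_of_forall_intervalIntegral_le {f : ℝ → ℝ} {I : ℝ}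
    (h : ∀ ε R : ℝ, 0 < ε → ε ≤ R → ∫ r in ε..R, f r ≤ I) :
    ∫ r in Ioi (0:ℝ), f r ≤ I := by
  by_cases hfi : IntegrableOn f (Ioi 0)
  swap
  · simpa [integral_undef hfi] using h 1 1 one_pos le_rfl
  have hR : ∀ R > (0:ℝ), ∫ r in (0:ℝ)..R, f r ≤ I := by
    intro R hR
    have hfR : IntegrableOn f (uIcc 0 R) := by
      rw [uIcc_of_le hR.le, integrableOn_Icc_iff_integrableOn_Ioc]
      exact hfi.mono_set Ioc_subset_Ioi_self
    have hcont : ContinuousWithinAt (fun x => ∫ t in x..R, f t) (Ioi 0) 0 :=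
      (intervalIntegral.continuousOn_primitive_interval_left hfR 0
        left_mem_uIcc).mono_of_mem_nhdsWithin (by rw [uIcc_of_le hR.le]; exact Icc_mem_nhdsGT hR)
    exact le_of_tendsto hcont
      (by filter_upwards [Ioc_mem_nhdsGT hR] with ε hε using h ε R hε.1 hε.2)
  exact le_of_tendsto (intervalIntegral_tendsto_integral_Ioi 0 hfi tendsto_id)
    ((eventually_gt_atTop 0).mono hR)

theorem frequently_lt_of_le_mul_integrableOn {B h : ℝ → ℝ} (hh : IntegrableOn h (Ioi 0))
    (hB : ∀ ε > 0, B ε ≤ ε * h ε) {c : ℝ} (hc : 0 < c) : ∃ᶠ ε in 𝓝[>] 0, B ε < c := by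
  intro hev
  obtain ⟨δ, hδ, hδB⟩ := mem_nhdsGT_iff_exists_Ioo_subset.1 hev
  have hinv : IntegrableOn (fun x : ℝ => x⁻¹) (Ioo 0 δ) := by
    refine ((hh.mono_set Ioo_subset_Ioi_self).const_mul c⁻¹).mono'
      measurable_inv.aestronglyMeasurable
      (ae_restrict_of_forall_mem measurableSet_Ioo fun x hx => ?_)
    have hx0 : 0 < x := hx.1
    rw [norm_inv, Real.norm_of_nonneg hx0.le, inv_le_iff_one_le_mul₀ hx0, mul_assoc,
      mul_comm (h x), le_inv_mul_iff₀ hc, mul_one]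
    exact (not_lt.1 (hδB hx)).trans (hB x hx0)
  have := (intervalIntegrable_iff_integrableOn_Ioo_of_le (le_of_lt hδ)).2 hinv
  simp [(mem_Ioi.1 hδ).ne, (mem_Ioi.1 hδ).le] at this

theorem setIntegral_Ioi_le_of_le_of_intervalIntegral_le_add {f P B h : ℝ → ℝ} {I : ℝ}
    (hf : ∀ r ∈ Ioi (0:ℝ), 0 ≤ f r) (hfP : ∀ r ∈ Ioi (0:ℝ), f r ≤ P r)
    (hfc : ContinuousOn f (Ioi 0)) (hPc : ContinuousOn P (Ioi 0))
    (hbound : ∀ ε R : ℝ, 0 < ε → ε ≤ R → ∫ r in ε..R, P r ≤ I + B ε)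
    (hh : IntegrableOn h (Ioi 0)) (hB : ∀ ε > 0, B ε ≤ ε * h ε) :
    ∫ r in Ioi (0:ℝ), f r ≤ I := by
  refine le_of_forall_pos_le_add fun c hc =>
    setIntegral_Ioi_le_of_forall_intervalIntegral_le fun ε' R hε' hε'R => ?_
  obtain ⟨ε, hBε, hε, hεε'⟩ :=
    ((frequently_lt_of_le_mul_integrableOn hh hB hc).and_eventually (Ioo_mem_nhdsGT hε')).exists
  have hεR := hεε'.le.trans hε'R
  have hsub : Icc ε R ⊆ Ioi 0 := fun x hx => hε.trans_le hx.1
  have hfi := (hfc.mono hsub).intervalIntegrable_of_Icc (μ := volume) hεR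
  calc ∫ r in ε'..R, f r ≤ ∫ r in ε..R, f r :=
        intervalIntegral.integral_mono_interval hεε'.le hε'R le_rfl
          (ae_restrict_of_forall_mem measurableSet_Ioc fun x hx =>
            hf x (hsub (Ioc_subset_Icc_self hx))) hfi
    _ ≤ ∫ r in ε..R, P r := intervalIntegral.integral_mono_on hεR hfi
          ((hPc.mono hsub).intervalIntegrable_of_Icc hεR) fun x hx => hfP x (hsub hx)
    _ ≤ I + B ε := hbound ε R hε hεR
    _ ≤ I + c := by linarith

theorem deriv_eq_of_eq_neg_div {w m : ℝ → ℝ} {w' r : ℝ} (hw : HasDerivAt w w' r) (hr : 0 < r)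
    (hm : ∀ x : ℝ, 0 < x → m x = -w x / (2 * x)) :
    deriv m r = (w r / r - w') / (2 * r) := by
  have h := hw.neg.div ((hasDerivAt_id r).const_mul 2) (by positivity)
  rw [(h.congr_of_eventuallyEq (eventually_of_mem (Ioi_mem_nhds hr) hm)).deriv]
  simp only [id, Pi.neg_apply]
  field_simp
  ring

theorem contDiffOn_of_eq_neg_div {w m : ℝ → ℝ} {n : WithTop ℕ∞} (hw : ContDiffOn ℝ n w (Ioi 0))
    (hm : ∀ x : ℝ, 0 < x → m x = -w x / (2 * x)) : ContDiffOn ℝ n m (Ioi 0) :=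
  (hw.neg.div (contDiffOn_const.mul contDiffOn_id) fun _ hx => (mul_pos two_pos hx).ne').congr hm

theorem sq_div_le_potential_of_le {r w w' w'' : ℝ} (hr : 0 < r)
    (h : r * (w' ^ 2 + 2 * w * w'') ≥ 2 * w * w') :
    w ^ 2 / (4 * r ^ 2)
      ≤ w' ^ 2 / 4 + w * w'' / 2 + w * ((w / r - w') / (2 * r)) - (-w / (2 * r)) ^ 2 := by
  have hgap : w' ^ 2 / 4 + w * w'' / 2 + w * ((w / r - w') / (2 * r)) - (-w / (2 * r)) ^ 2
      - w ^ 2 / (4 * r ^ 2) = (r * (w' ^ 2 + 2 * w * w'') - 2 * w * w') / (4 * r) := by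
    field_simp
    ring
  linarith [div_nonneg (sub_nonneg.2 h) (by positivity : (0:ℝ) ≤ 4 * r)]

noncomputable def potential (w m : ℝ → ℝ) (r : ℝ) : ℝ :=
  deriv w r ^ 2 / 4 + w r * deriv (deriv w) r / 2 + w r * deriv m r - m r ^ 2

theorem continuousOn_potential_mul_norm_sq {F : Type*} [NormedAddCommGroup F] [NormedSpace ℝ F]
    {w m : ℝ → ℝ} {g : ℝ → F} {s : Set ℝ} (hs : IsOpen s)
    (hw : ContDiffOn ℝ 2 w s) (hm : ContDiffOn ℝ 1 m s) (hg : ContDiffOn ℝ 1 g s) :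
    ContinuousOn (fun x => potential w m x * ‖g x‖ ^ 2) s := by
  have := hw.continuousOn
  have := hw.continuousOn_deriv_of_isOpen hs (by norm_num)
  have := (hw.deriv_of_isOpen hs (m := 1) (by norm_num)).continuousOn_deriv_of_isOpen hs le_rfl
  have := hm.continuousOn
  have := hm.continuousOn_deriv_of_isOpen hs le_rfl
  have := hg.continuousOn
  unfold potential
  fun_prop

theorem sq_div_mul_le_potential_mul {F : Type*} [Norm F] {w m : ℝ → ℝ} {g : ℝ → F} {r : ℝ}
    (hr : 0 < r) (hw : DifferentiableAt ℝ w r)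
    (hw_ineq : r * ((deriv w r) ^ 2 + 2 * w r * deriv (deriv w) r) ≥ 2 * w r * deriv w r)
    (hm : ∀ r : ℝ, 0 < r → m r = -(w r) / (2 * r)) :
    w r ^ 2 * ‖g r‖ ^ 2 / (4 * r ^ 2) ≤ potential w m r * ‖g r‖ ^ 2 := by
  rw [potential, deriv_eq_of_eq_neg_div hw.hasDerivAt hr hm, hm r hr, mul_div_right_comm]
  exact mul_le_mul_of_nonneg_right (sq_div_le_potential_of_le hr hw_ineq) (by positivity)

theorem neg_boundary_le_of_eq_neg_div {F : Type*} [Norm F] {w m : ℝ → ℝ} {g : ℝ → F} {ε : ℝ}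
    (hε : 0 < ε) (hm : ∀ r : ℝ, 0 < r → m r = -(w r) / (2 * r)) :
    -(w ε * (deriv w ε / 2 + m ε) * ‖g ε‖ ^ 2)
      ≤ ε * (4 * (w ε ^ 2 * ‖g ε‖ ^ 2 / (4 * ε ^ 2)) + deriv w ε ^ 2 * ‖g ε‖ ^ 2) := by
  have hgap : ε * (4 * (w ε ^ 2 * ‖g ε‖ ^ 2 / (4 * ε ^ 2)) + deriv w ε ^ 2 * ‖g ε‖ ^ 2)
        + w ε * (deriv w ε / 2 + m ε) * ‖g ε‖ ^ 2
      = ‖g ε‖ ^ 2 * ((2 * w ε + ε * deriv w ε) ^ 2 + 7 * ε ^ 2 * deriv w ε ^ 2) / (8 * ε) := by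
    rw [hm ε hε]
    field_simp
    ring
  have : 0 ≤ ‖g ε‖ ^ 2 * ((2 * w ε + ε * deriv w ε) ^ 2 + 7 * ε ^ 2 * deriv w ε ^ 2) / (8 * ε) := by
    positivity
  linarith

section InnerProductSpace

variable {E : Type*} [NormedAddCommGroup E] [InnerProductSpace ℝ E]

theorem intervalIntegral_potential_sub_le_of_hasDerivAt {w w' w'' m m' : ℝ → ℝ} {g g' : ℝ → E}
    {a b : ℝ} (hab : a ≤ b) (hw : ∀ x ∈ Icc a b, HasDerivAt w (w' x) x)
    (hw' : ∀ x ∈ Icc a b, HasDerivAt w' (w'' x) x) (hm : ∀ x ∈ Icc a b, HasDerivAt m (m' x) x)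
    (hg : ∀ x ∈ Icc a b, HasDerivAt g (g' x) x)
    (hint : IntervalIntegrable (fun x => (w' x ^ 2 / 4 + w x * w'' x / 2 + w x * m' x - m x ^ 2)
      * ‖g x‖ ^ 2 - w x ^ 2 * ‖g' x‖ ^ 2) volume a b) :
    ∫ x in a..b, ((w' x ^ 2 / 4 + w x * w'' x / 2 + w x * m' x - m x ^ 2) * ‖g x‖ ^ 2
        - w x ^ 2 * ‖g' x‖ ^ 2)
      ≤ w b * (w' b / 2 + m b) * ‖g b‖ ^ 2 - w a * (w' a / 2 + m a) * ‖g a‖ ^ 2 := by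
  have hF : ∀ x ∈ Icc a b, HasDerivAt (fun x => w x * (w' x / 2 + m x) * ‖g x‖ ^ 2)
      ((w' x * (w' x / 2 + m x) + w x * (w'' x / 2 + m' x)) * ‖g x‖ ^ 2
        + w x * (w' x / 2 + m x) * (2 * inner ℝ (g x) (g' x))) x := fun x hx =>
    ((hw x hx).mul (((hw' x hx).div_const 2).add (hm x hx))).mul (hg x hx).norm_sq
  refine intervalIntegral.integral_le_sub_of_hasDeriv_right_of_le hab
    (fun x hx => (hF x hx).continuousAt.continuousWithinAt)
    (fun x hx => (hF x (Ioo_subset_Icc_self hx)).hasDerivWithinAt)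
    ((integrableOn_Icc_iff_integrableOn_Ioc).2 hint.1) fun x _ => ?_
  -- the gap between the two sides is `‖w g' + (w'/2 + m) g‖²`
  have hsq := norm_add_sq_real (w x • g' x) ((w' x / 2 + m x) • g x)
  rw [norm_smul, norm_smul, inner_smul_left, inner_smul_right, real_inner_comm,
    Real.norm_eq_abs, Real.norm_eq_abs, mul_pow, mul_pow, sq_abs, sq_abs] at hsq
  simp only [conj_trivial] at hsq
  nlinarith [norm_nonneg (w x • g' x + (w' x / 2 + m x) • g x)]

theorem intervalIntegral_potential_le_of_contDiffOn {w m : ℝ → ℝ} {g : ℝ → E} {s : Set ℝ}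
    {a b : ℝ} (hs : IsOpen s) (hw : ContDiffOn ℝ 2 w s) (hm : ContDiffOn ℝ 1 m s)
    (hg : ContDiffOn ℝ 1 g s) (hab : a ≤ b) (hsub : Icc a b ⊆ s) :
    ∫ x in a..b, potential w m x * ‖g x‖ ^ 2
      ≤ (∫ x in a..b, w x ^ 2 * ‖deriv g x‖ ^ 2)
        + w b * (deriv w b / 2 + m b) * ‖g b‖ ^ 2 - w a * (deriv w a / 2 + m a) * ‖g a‖ ^ 2 := by
  have hw' : ContDiffOn ℝ 1 (deriv w) s := hw.deriv_of_isOpen hs (by norm_num)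
  have hP := ((continuousOn_potential_mul_norm_sq hs hw hm hg).mono hsub).intervalIntegrable_of_Icc
    (μ := volume) hab
  have hK : IntervalIntegrable (fun x => w x ^ 2 * ‖deriv g x‖ ^ 2) volume a b := by
    have := hw.continuousOn
    have := hg.continuousOn_deriv_of_isOpen hs le_rfl
    have hKs : ContinuousOn (fun x => w x ^ 2 * ‖deriv g x‖ ^ 2) s := by fun_prop
    exact (hKs.mono hsub).intervalIntegrable_of_Icc hab
  have : ∫ x in a..b, (potential w m x * ‖g x‖ ^ 2 - w x ^ 2 * ‖deriv g x‖ ^ 2)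
      ≤ w b * (deriv w b / 2 + m b) * ‖g b‖ ^ 2 - w a * (deriv w a / 2 + m a) * ‖g a‖ ^ 2 :=
    intervalIntegral_potential_sub_le_of_hasDerivAt hab
      (fun x hx => (hw.differentiableOn (by norm_num)).hasDerivAt (hs.mem_nhds (hsub hx)))
      (fun x hx => (hw'.differentiableOn (by norm_num)).hasDerivAt (hs.mem_nhds (hsub hx)))
      (fun x hx => (hm.differentiableOn (by norm_num)).hasDerivAt (hs.mem_nhds (hsub hx)))
      (fun x hx => (hg.differentiableOn (by norm_num)).hasDerivAt (hs.mem_nhds (hsub hx)))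
      (hP.sub hK)
  rw [intervalIntegral.integral_sub hP hK] at this
  linarith

theorem intervalIntegral_potential_le_add_boundary {w m : ℝ → ℝ} {g : ℝ → E}
    (hw : ContDiffOn ℝ 2 w (Ioi 0)) (hw_nonneg : ∀ r ∈ Ioi (0:ℝ), 0 ≤ w r)
    (hw_mono : ∀ r ∈ Ioi (0:ℝ), deriv w r ≤ 0) (hm : ContDiffOn ℝ 1 m (Ioi 0))
    (hm_nonpos : ∀ r ∈ Ioi (0:ℝ), m r ≤ 0) (hg : ContDiffOn ℝ 1 g (Ioi 0))
    (hK : IntegrableOn (fun r => w r ^ 2 * ‖deriv g r‖ ^ 2) (Ioi 0)) {ε R : ℝ} (hε : 0 < ε)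
    (hεR : ε ≤ R) :
    ∫ r in ε..R, potential w m r * ‖g r‖ ^ 2
      ≤ (∫ r in Ioi (0:ℝ), w r ^ 2 * ‖deriv g r‖ ^ 2)
        + -(w ε * (deriv w ε / 2 + m ε) * ‖g ε‖ ^ 2) := by
  have hR : 0 < R := hε.trans_le hεR
  have hFR : w R * (deriv w R / 2 + m R) * ‖g R‖ ^ 2 ≤ 0 :=
    mul_nonpos_of_nonpos_of_nonneg (mul_nonpos_of_nonneg_of_nonpos (hw_nonneg R hR)
      (by linarith [hw_mono R hR, hm_nonpos R hR])) (by positivity)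
  have hKεR : ∫ r in ε..R, w r ^ 2 * ‖deriv g r‖ ^ 2
      ≤ ∫ r in Ioi (0:ℝ), w r ^ 2 * ‖deriv g r‖ ^ 2 := by
    rw [intervalIntegral.integral_of_le hεR]
    exact setIntegral_mono_set hK (ae_of_all _ fun r => by positivity)
      (Ioc_subset_Ioi_self.trans (Ioi_subset_Ioi hε.le)).eventuallyLE
  linarith [intervalIntegral_potential_le_of_contDiffOn isOpen_Ioi hw hm hg hεR
    fun x hx => hε.trans_le hx.1]

end InnerProductSpace

theorem stmt_11_general (w : ℝ → ℝ) (hw : ContDiffOn ℝ 2 w (Ioi (0:ℝ)))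
    (hw_nonneg : ∀ r ∈ Ioi (0:ℝ), 0 ≤ w r)
    (hw_mono : ∀ r ∈ Ioi (0:ℝ), deriv w r ≤ 0)
    (hw_ineq : ∀ r ∈ Ioi (0:ℝ),
      r * ((deriv w r) ^ 2 + 2 * w r * deriv (deriv w) r) ≥ 2 * w r * deriv w r)
    (g : ℝ → ℂ) (hg : ContDiffOn ℝ 1 g (Ioi (0:ℝ)))
    (hint : IntegrableOn
      (fun r => (w r) ^ 2 * ‖deriv g r‖ ^ 2 + (deriv w r) ^ 2 * ‖g r‖ ^ 2) (Ioi (0:ℝ)))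
    (m : ℝ → ℝ) (hm : ∀ r : ℝ, 0 < r → m r = -(w r) / (2 * r)) :
    (∫ r in Ioi (0:ℝ),
        ((deriv w r) ^ 2 / 4 + w r * deriv (deriv w) r / 2
          + w r * deriv m r - (m r) ^ 2) * ‖g r‖ ^ 2
      ≤ ∫ r in Ioi (0:ℝ), (w r) ^ 2 * ‖deriv g r‖ ^ 2)
    ∧ ∫ r in Ioi (0:ℝ), (w r) ^ 2 * ‖g r‖ ^ 2 / (4 * r ^ 2)
        ≤ ∫ r in Ioi (0:ℝ), (w r) ^ 2 * ‖deriv g r‖ ^ 2 := by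
  change (∫ r in Ioi (0:ℝ), potential w m r * ‖g r‖ ^ 2 ≤ _) ∧ _
  have hm' := (contDiffOn_of_eq_neg_div hw hm).of_le one_le_two
  have hm_nonpos : ∀ r ∈ Ioi (0:ℝ), m r ≤ 0 := fun r (hr : 0 < r) => by
    rw [hm r hr]
    exact div_nonpos_of_nonpos_of_nonneg (neg_nonpos.2 (hw_nonneg r hr)) (by positivity)
  obtain ⟨hK, hW⟩ : IntegrableOn (fun r => w r ^ 2 * ‖deriv g r‖ ^ 2) (Ioi 0)
      ∧ IntegrableOn (fun r => deriv w r ^ 2 * ‖g r‖ ^ 2) (Ioi 0) := by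
    have := hw.continuousOn
    have := hg.continuousOn_deriv_of_isOpen isOpen_Ioi le_rfl
    exact (integrable_add_iff_of_nonneg (ContinuousOn.aestronglyMeasurable (by fun_prop)
      measurableSet_Ioi) (ae_of_all _ fun r => by positivity)
      (ae_of_all _ fun r => by positivity)).1 hint
  have hVc := continuousOn_potential_mul_norm_sq isOpen_Ioi hw hm' hg
  have hHc : ContinuousOn (fun r => w r ^ 2 * ‖g r‖ ^ 2 / (4 * r ^ 2)) (Ioi 0) := by
    have := hw.continuousOn
    have := hg.continuousOn
    fun_prop (disch := intro r (hr : 0 < r); positivity)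
  have hH0 : ∀ r ∈ Ioi (0:ℝ), 0 ≤ w r ^ 2 * ‖g r‖ ^ 2 / (4 * r ^ 2) := fun r _ => by positivity
  have hHV (r : ℝ) (hr : r ∈ Ioi (0:ℝ)) := sq_div_mul_le_potential_mul (g := g) hr
    ((hw.differentiableOn two_ne_zero).differentiableAt (Ioi_mem_nhds hr)) (hw_ineq r hr) hm
  have hbound (ε R : ℝ) (hε : 0 < ε) (hεR : ε ≤ R) := intervalIntegral_potential_le_add_boundary
    hw hw_nonneg hw_mono hm' hm_nonpos hg hK hε hεR
  by_cases hHi : IntegrableOn (fun r => w r ^ 2 * ‖g r‖ ^ 2 / (4 * r ^ 2)) (Ioi 0)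
  · have hB (ε : ℝ) (hε : ε > 0) := neg_boundary_le_of_eq_neg_div (g := g) hε hm
    have hh := (hHi.const_mul 4).add hW
    exact ⟨setIntegral_Ioi_le_of_le_of_intervalIntegral_le_add
        (fun r hr => (hH0 r hr).trans (hHV r hr)) (fun _ _ => le_rfl) hVc hVc hbound hh hB,
      setIntegral_Ioi_le_of_le_of_intervalIntegral_le_add hH0 hHV hHc hVc hbound hh hB⟩
  · have hV : ¬ IntegrableOn (fun r => potential w m r * ‖g r‖ ^ 2) (Ioi 0) := fun hV =>
      hHi (hV.mono_nonneg (hHc.aestronglyMeasurable measurableSet_Ioi)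
        (ae_restrict_of_forall_mem measurableSet_Ioi hH0)
        (ae_restrict_of_forall_mem measurableSet_Ioi hHV))
    have hI : 0 ≤ ∫ r in Ioi (0:ℝ), w r ^ 2 * ‖deriv g r‖ ^ 2 :=
      setIntegral_nonneg measurableSet_Ioi fun r _ => by positivity
    exact ⟨(integral_undef hV).trans_le hI, (integral_undef hHi).trans_le hI⟩

/-- Operator-square step of the weighted Hardy inequality: with
`G = (1/i)(w ∂_r + w'/2)` and `m(r) = -w(r)/(2r)`, nonnegativity of `‖(G-im)g‖²`
yields `∫ (¼(w')² + ½ww'' + wm' - m²)|g|² ≤ ∫ w²|g'|²`, and the pointwise bound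
`¼(w')² + ½ww'' - ww'/(2r) + w²/(4r²) ≥ w²/(4r²)` (equivalent to
`r(w'² + 2ww'') ≥ 2ww'`) then gives `∫ w²|g|²/(4r²) ≤ ∫ w²|g'|²`. -/
theorem stmt_11 (w : ℝ → ℝ) (hw : ContDiffOn ℝ 2 w (Ioi (0:ℝ)))
    (hw_nonneg : ∀ r ∈ Ioi (0:ℝ), 0 ≤ w r)
    (hw_mono : ∀ r ∈ Ioi (0:ℝ), deriv w r ≤ 0)
    (hw_ineq : ∀ r ∈ Ioi (0:ℝ),
      r * ((deriv w r) ^ 2 + 2 * w r * deriv (deriv w) r) ≥ 2 * w r * deriv w r)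
    (g : ℝ → ℂ) (hg : ContDiffOn ℝ 1 g (Ioi (0:ℝ)))
    (hint : IntegrableOn
      (fun r => (w r) ^ 2 * ‖deriv g r‖ ^ 2 + (deriv w r) ^ 2 * ‖g r‖ ^ 2) (Ioi (0:ℝ)))
    (hliminf : liminf (fun r => w r * deriv w r * ‖g r‖ ^ 2) (nhdsWithin 0 (Ioi (0:ℝ))) = 0)
    (m : ℝ → ℝ) (hm : ∀ r : ℝ, 0 < r → m r = -(w r) / (2 * r)) :
    (∫ r in Ioi (0:ℝ),
        ((deriv w r) ^ 2 / 4 + w r * deriv (deriv w) r / 2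
          + w r * deriv m r - (m r) ^ 2) * ‖g r‖ ^ 2
      ≤ ∫ r in Ioi (0:ℝ), (w r) ^ 2 * ‖deriv g r‖ ^ 2)
    ∧ ∫ r in Ioi (0:ℝ), (w r) ^ 2 * ‖g r‖ ^ 2 / (4 * r ^ 2)
        ≤ ∫ r in Ioi (0:ℝ), (w r) ^ 2 * ‖deriv g r‖ ^ 2 :=
  stmt_11_general w hw hw_nonneg hw_mono hw_ineq g hg hint m hm
end
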